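/- Let ((ΔYᵢ, Rᵢ, Uᵢ, D*ᵢ, Δξᵢ))_{i∈ℕ} be an i.i.d. sequence of copies of (ΔY, R, U, D*, Δξ) on a probability space, where: R : Ω → ℝ^k; U is a real random variable independent of R with standard Gaussian law; D* := 1{⟪R, γ⟫ + U ≥ 0} for a fixed γ ∈ ℝ^k; Δξ is a real random variable with E[Δξ | σ(R)] = 0 almost surely; and ΔY = δ + τ·D* + Δξ almost surely for constants δ, τ ∈ ℝ, with E[ΔY²] < ∞, E[‖R‖²] < ∞ and E[‖R‖·|ΔY|] < ∞. Let (γ̂_N)_{N∈ℕ} be random vectors in ℝ^k converging in probability to γ, write pᵢ_N := Φ(⟪Rᵢ, γ̂_N⟫) with Φ the standard normal CDF, and define the two-step slope estimator τ̂_N := [∑_{i<N}(pᵢ_N − p̄_N)(ΔYᵢ − ΔȲ_N)] / [∑_{i<N}(pᵢ_N − p̄_N)²], where p̄_N and ΔȲ_N are the respective sample means (τ̂_N defined whenever the denominator is nonzero). If Var(Φ(⟪R, γ⟫)) > 0, then τ̂_N converges in probability to τ. -/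

import Mathlib

/-! Since `U ⊥ R` is standard Gaussian, `E[D* | R] = Φ(⟪R, γ⟫) =: p`, and together with
`E[Δξ | R] = 0` this gives `E[ΔY | R] = δ + τ p`, hence `Cov(p, ΔY) = τ Var(p)`. By the
strong law, the sample moments of the infeasible regressor `pᵢ = Φ(⟪Rᵢ, γ⟫)` converge to the
population ones, so its OLS slope tends to `τ`. Replacing `pᵢ` by `Φ(⟪Rᵢ, γ̂_N⟫)` moves each
term by at most `(2π)^{-1/2} k ‖γ̂_N − γ‖ ‖Rᵢ‖` (Φ is Lipschitz), which vanishes in the sample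
means along every subsequence on which `γ̂_N → γ` almost surely; the subsequence criterion for
convergence in probability concludes. -/

open MeasureTheory ProbabilityTheory Filter
open scoped Matrix

/-- The standard normal density. -/
noncomputable def stdNormalPDF (x : ℝ) : ℝ :=
  (Real.sqrt (2 * Real.pi))⁻¹ * Real.exp (-x ^ 2 / 2)

/-- The standard normal CDF `Φ(x) = ∫_{−∞}^x (2π)^{−1/2} e^{−t²/2} dt`. -/
noncomputable def stdNormalCDF (x : ℝ) : ℝ :=
  ∫ t in Set.Iic x, stdNormalPDF t

open Finset Real Topology

lemma stdNormalPDF_eq_gaussianPDFReal : stdNormalPDF = gaussianPDFReal 0 1 := by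
  funext x
  simp [stdNormalPDF, gaussianPDFReal, neg_div]

lemma stdNormalPDF_nonneg (x : ℝ) : 0 ≤ stdNormalPDF x :=
  stdNormalPDF_eq_gaussianPDFReal ▸ gaussianPDFReal_nonneg 0 1 x

lemma stdNormalPDF_le (x : ℝ) : stdNormalPDF x ≤ (√(2 * π))⁻¹ :=
  mul_le_of_le_one_right (by positivity) (exp_le_one_iff.2 (by nlinarith [sq_nonneg x]))

lemma integrable_stdNormalPDF : Integrable stdNormalPDF :=
  stdNormalPDF_eq_gaussianPDFReal ▸ integrable_gaussianPDFReal 0 1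

lemma stdNormalCDF_nonneg (x : ℝ) : 0 ≤ stdNormalCDF x :=
  integral_nonneg stdNormalPDF_nonneg

lemma stdNormalCDF_le_one (x : ℝ) : stdNormalCDF x ≤ 1 := by
  rw [stdNormalCDF, ← integral_gaussianPDFReal_eq_one 0 one_ne_zero,
    ← stdNormalPDF_eq_gaussianPDFReal]
  exact setIntegral_le_integral integrable_stdNormalPDF (ae_of_all _ stdNormalPDF_nonneg)

lemma abs_stdNormalCDF_le_one (x : ℝ) : |stdNormalCDF x| ≤ 1 :=
  abs_le.2 ⟨by linarith [stdNormalCDF_nonneg x], stdNormalCDF_le_one x⟩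

lemma stdNormalCDF_sub_stdNormalCDF {a b : ℝ} (hab : a ≤ b) :
    stdNormalCDF b - stdNormalCDF a = ∫ t in Set.Ioc a b, stdNormalPDF t := by
  rw [stdNormalCDF, stdNormalCDF, sub_eq_iff_eq_add', ← Set.Iic_union_Ioc_eq_Iic hab,
    setIntegral_union (Set.Iic_disjoint_Ioc le_rfl) measurableSet_Ioc
      integrable_stdNormalPDF.integrableOn integrable_stdNormalPDF.integrableOn]

lemma abs_stdNormalCDF_sub_le (a b : ℝ) :
    |stdNormalCDF b - stdNormalCDF a| ≤ (√(2 * π))⁻¹ * |b - a| := by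
  wlog hab : a ≤ b with H
  · simpa only [abs_sub_comm] using H b a (le_of_not_ge hab)
  rw [stdNormalCDF_sub_stdNormalCDF hab, abs_of_nonneg (integral_nonneg stdNormalPDF_nonneg),
    abs_of_nonneg (sub_nonneg.2 hab)]
  calc ∫ t in Set.Ioc a b, stdNormalPDF t
      ≤ ∫ _ in Set.Ioc a b, (√(2 * π))⁻¹ :=
        setIntegral_mono_on integrable_stdNormalPDF.integrableOn
          (integrableOn_const measure_Ioc_lt_top.ne) measurableSet_Ioc
          fun t _ => stdNormalPDF_le t
    _ = (√(2 * π))⁻¹ * (b - a) := by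
        simp [mul_comm, hab]

@[fun_prop]
lemma continuous_stdNormalCDF : Continuous stdNormalCDF :=
  LipschitzWith.continuous (K := (√(2 * π))⁻¹.toNNReal) <| LipschitzWith.of_dist_le_mul
    fun x y => by
      simpa [Real.dist_eq, Real.coe_toNNReal _ (by positivity : (0 : ℝ) ≤ (√(2 * π))⁻¹)]
        using abs_stdNormalCDF_sub_le y x

@[fun_prop]
lemma measurable_stdNormalCDF : Measurable stdNormalCDF :=
  continuous_stdNormalCDF.measurable

lemma memLp_stdNormalCDF_comp {Ω : Type*} {mΩ : MeasurableSpace Ω} {μ : Measure Ω}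
    [IsFiniteMeasure μ] {X : Ω → ℝ} (hX : AEMeasurable X μ) (p : ENNReal) :
    MemLp (fun ω => stdNormalCDF (X ω)) p μ :=
  MemLp.of_bound (measurable_stdNormalCDF.comp_aemeasurable hX).aestronglyMeasurable 1
    (ae_of_all _ fun ω => abs_stdNormalCDF_le_one (X ω))

lemma abs_stdNormalCDF_dotProduct_sub_le {k : ℕ} (r θ γ : Fin k → ℝ) :
    |stdNormalCDF (r ⬝ᵥ θ) - stdNormalCDF (r ⬝ᵥ γ)| ≤ (√(2 * π))⁻¹ * k * ‖θ - γ‖ * ‖r‖ := by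
  -- `‖·‖` is the sup norm on `Fin k → ℝ`, hence the factor `k`
  have hdot : |r ⬝ᵥ (θ - γ)| ≤ k * (‖r‖ * ‖θ - γ‖) := by
    refine (abs_sum_le_sum_abs _ _).trans ?_
    simpa [abs_mul] using sum_le_sum fun i (_ : i ∈ univ) =>
      mul_le_mul (norm_le_pi_norm r i) (norm_le_pi_norm (θ - γ) i) (abs_nonneg _) (norm_nonneg _)
  calc |stdNormalCDF (r ⬝ᵥ θ) - stdNormalCDF (r ⬝ᵥ γ)|
      ≤ (√(2 * π))⁻¹ * |r ⬝ᵥ (θ - γ)| := by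
        simpa only [dotProduct_sub] using abs_stdNormalCDF_sub_le (r ⬝ᵥ γ) (r ⬝ᵥ θ)
    _ ≤ (√(2 * π))⁻¹ * (k * (‖r‖ * ‖θ - γ‖)) := by gcongr
    _ = (√(2 * π))⁻¹ * k * ‖θ - γ‖ * ‖r‖ := by ring

lemma gaussianReal_real_Ici_neg (c : ℝ) :
    (gaussianReal 0 1).real (Set.Ici (-c)) = stdNormalCDF c := by
  rw [measureReal_def, gaussianReal_apply_eq_integral 0 one_ne_zero,
    ENNReal.toReal_ofReal (integral_nonneg (gaussianPDFReal_nonneg 0 1)),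
    ← stdNormalPDF_eq_gaussianPDFReal, integral_Ici_eq_integral_Ioi, stdNormalCDF]
  conv_rhs => rw [← neg_neg c, ← integral_comp_neg_Ioi]
  simp [stdNormalPDF]

noncomputable def sampleMean (N : ℕ) (x : ℕ → ℝ) : ℝ :=
  (∑ i ∈ range N, x i) / N

noncomputable def olsSlope (N : ℕ) (x y : ℕ → ℝ) : ℝ :=
  (∑ i ∈ range N, (x i - sampleMean N x) * (y i - sampleMean N y)) /
    ∑ i ∈ range N, (x i - sampleMean N x) ^ 2

lemma measurable_olsSlope {Ω : Type*} {mΩ : MeasurableSpace Ω} {x y : ℕ → Ω → ℝ}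
    (hx : ∀ i, Measurable (x i)) (hy : ∀ i, Measurable (y i)) (N : ℕ) :
    Measurable fun ω => olsSlope N (fun i => x i ω) (fun i => y i ω) := by
  unfold olsSlope sampleMean
  fun_prop

lemma olsSlope_eq_sum_fin (N : ℕ) (x y : ℕ → ℝ) :
    olsSlope N x y =
      (∑ i : Fin N, (x i - (∑ j : Fin N, x j) / N) * (y i - (∑ j : Fin N, y j) / N)) /
        ∑ i : Fin N, (x i - (∑ j : Fin N, x j) / N) ^ 2 := by
  simp only [olsSlope, sampleMean, sum_range]

lemma sampleMean_centered_mul {N : ℕ} (hN : N ≠ 0) (x y : ℕ → ℝ) :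
    sampleMean N (fun i => (x i - sampleMean N x) * (y i - sampleMean N y)) =
      sampleMean N (fun i => x i * y i) - sampleMean N x * sampleMean N y := by
  simp only [sampleMean, sub_mul, mul_sub, sum_sub_distrib, ← mul_sum, ← sum_mul, sum_const,
    card_range, nsmul_eq_mul]
  field_simp
  ring

lemma olsSlope_eq_div {N : ℕ} (hN : N ≠ 0) (x y : ℕ → ℝ) :
    olsSlope N x y =
      (sampleMean N (fun i => x i * y i) - sampleMean N x * sampleMean N y) /
        (sampleMean N (fun i => x i ^ 2) - sampleMean N x ^ 2) := by
  have hxx := sampleMean_centered_mul hN x x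
  simp only [← pow_two] at hxx
  rw [← sampleMean_centered_mul hN, ← hxx]
  exact (div_div_div_cancel_right₀ (Nat.cast_ne_zero.2 hN) _ _).symm

lemma abs_sampleMean_sub_sampleMean_le {N : ℕ} {x z r : ℕ → ℝ} {c : ℝ}
    (h : ∀ i, |x i - z i| ≤ c * r i) :
    |sampleMean N x - sampleMean N z| ≤ c * sampleMean N r := by
  rw [sampleMean, sampleMean, sampleMean, ← sub_div, abs_div, Nat.abs_cast, mul_div_assoc',
    ← sum_sub_distrib, mul_sum]
  gcongr
  exact (abs_sum_le_sum_abs _ _).trans (sum_le_sum fun i _ => h i)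

section Limits

variable {ι : Type*} {l : Filter ι} {N : ι → ℕ}

lemma tendsto_olsSlope (hN : Tendsto N l atTop) {x y : ι → ℕ → ℝ} {a b c d : ℝ}
    (hx : Tendsto (fun n => sampleMean (N n) (x n)) l (𝓝 a))
    (hxx : Tendsto (fun n => sampleMean (N n) fun i => x n i ^ 2) l (𝓝 b))
    (hxy : Tendsto (fun n => sampleMean (N n) fun i => x n i * y n i) l (𝓝 c))
    (hy : Tendsto (fun n => sampleMean (N n) (y n)) l (𝓝 d)) (hab : b - a ^ 2 ≠ 0) :
    Tendsto (fun n => olsSlope (N n) (x n) (y n)) l (𝓝 ((c - a * d) / (b - a ^ 2))) :=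
  ((hxy.sub (hx.mul hy)).div (hxx.sub (hx.pow 2)) hab).congr' <| by
    filter_upwards [hN.eventually_ne_atTop 0] with n hn
    rw [olsSlope_eq_div hn]
    rfl

lemma tendsto_sampleMean_of_abs_sub_le (hN : Tendsto N l atTop) {x : ι → ℕ → ℝ}
    {z r : ℕ → ℝ} {e : ι → ℝ} {a m : ℝ} (hxz : ∀ n i, |x n i - z i| ≤ e n * r i)
    (he : Tendsto e l (𝓝 0)) (hz : Tendsto (fun N => sampleMean N z) atTop (𝓝 a))
    (hr : Tendsto (fun N => sampleMean N r) atTop (𝓝 m)) :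
    Tendsto (fun n => sampleMean (N n) (x n)) l (𝓝 a) := by
  have hdiff : Tendsto (fun n => sampleMean (N n) (x n) - sampleMean (N n) z) l (𝓝 0) := by
    have hbound := he.mul (hr.comp hN)
    rw [zero_mul] at hbound
    exact squeeze_zero_norm (fun n => abs_sampleMean_sub_sampleMean_le (hxz n)) hbound
  simpa using hdiff.add (hz.comp hN)

lemma tendsto_olsSlope_of_abs_sub_le (hN : Tendsto N l atTop) {x : ι → ℕ → ℝ}
    {z y r : ℕ → ℝ} {e : ι → ℝ} {C a b c d m m' : ℝ}
    (hxz : ∀ n i, |x n i - z i| ≤ e n * r i) (he : Tendsto e l (𝓝 0))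
    (hx : ∀ n i, |x n i| ≤ C) (hz : ∀ i, |z i| ≤ C)
    (hmz : Tendsto (fun N => sampleMean N z) atTop (𝓝 a))
    (hmzz : Tendsto (fun N => sampleMean N fun i => z i ^ 2) atTop (𝓝 b))
    (hmzy : Tendsto (fun N => sampleMean N fun i => z i * y i) atTop (𝓝 c))
    (hmy : Tendsto (fun N => sampleMean N y) atTop (𝓝 d))
    (hmr : Tendsto (fun N => sampleMean N r) atTop (𝓝 m))
    (hmry : Tendsto (fun N => sampleMean N fun i => r i * |y i|) atTop (𝓝 m'))
    (hab : b - a ^ 2 ≠ 0) :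
    Tendsto (fun n => olsSlope (N n) (x n) y) l (𝓝 ((c - a * d) / (b - a ^ 2))) := by
  have hxx : ∀ n i, |x n i ^ 2 - z i ^ 2| ≤ (2 * C * e n) * r i := fun n i => by
    calc |x n i ^ 2 - z i ^ 2| = |x n i - z i| * |x n i + z i| := by
          rw [← abs_mul]; ring_nf
      _ ≤ (e n * r i) * (2 * C) :=
          mul_le_mul (hxz n i) (by linarith [abs_add_le (x n i) (z i), hx n i, hz i])
            (abs_nonneg _) ((abs_nonneg _).trans (hxz n i))
      _ = (2 * C * e n) * r i := by ring
  have hxy : ∀ n i, |x n i * y i - z i * y i| ≤ e n * (r i * |y i|) := fun n i => by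
    rw [← sub_mul, abs_mul, ← mul_assoc]
    exact mul_le_mul_of_nonneg_right (hxz n i) (abs_nonneg _)
  exact tendsto_olsSlope (y := fun _ => y) hN
    (tendsto_sampleMean_of_abs_sub_le hN hxz he hmz hmr)
    (tendsto_sampleMean_of_abs_sub_le hN hxx (by simpa using he.const_mul (2 * C)) hmzz hmr)
    (tendsto_sampleMean_of_abs_sub_le hN hxy he hmzy hmry) (hmy.comp hN) hab

end Limits

section Probability

variable {Ω : Type*} {mΩ : MeasurableSpace Ω} {μ : Measure Ω}

lemma ae_tendsto_sampleMean_comp {β : Type*} [MeasurableSpace β] {X : ℕ → Ω → β}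
    (hindep : iIndepFun X μ) (hident : ∀ i, IdentDistrib (X i) (X 0) μ μ) {f : β → ℝ}
    (hf : Measurable f) (hint : Integrable (fun ω => f (X 0 ω)) μ) :
    ∀ᵐ ω ∂μ, Tendsto (fun N => sampleMean N fun i => f (X i ω)) atTop
      (𝓝 (∫ ω, f (X 0 ω) ∂μ)) :=
  strong_law_ae_real (fun i ω => f (X i ω)) hint
    (fun _ _ hij => (hindep.indepFun hij).comp hf hf) fun i => (hident i).comp hf

lemma integral_mul_eq_zero_of_condExp_eq_zero [IsFiniteMeasure μ] {m : MeasurableSpace Ω}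
    (hm : m ≤ mΩ) {f g : Ω → ℝ} (hf : StronglyMeasurable[m] f) (hfg : Integrable (f * g) μ)
    (hg : Integrable g μ) (hcond : μ[g | m] =ᵐ[μ] fun _ => 0) :
    ∫ ω, f ω * g ω ∂μ = 0 := by
  refine (integral_condExp hm (f := f * g)).symm.trans <|
    (integral_congr_ae ?_).trans (integral_zero Ω ℝ)
  filter_upwards [condExp_mul_of_stronglyMeasurable_left hf hfg hg, hcond] with ω h h0
  rw [h, Pi.mul_apply, h0, mul_zero]

variable [IsProbabilityMeasure μ] {E : Type*} [MeasurableSpace E] {R : Ω → E} {U : Ω → ℝ}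
  {g : E → ℝ}

/-- Conditionally on `R`, the latent index `g R + U` is nonnegative with probability
`Φ (g R)`. -/
lemma integral_mul_indicator_eq_integral_mul_stdNormalCDF (hR : Measurable R)
    (hU : Measurable U) (hUR : IndepFun U R μ) (hUgauss : μ.map U = gaussianReal 0 1)
    (hg : Measurable g) {f : E → ℝ} (hf : Measurable f)
    (hfint : Integrable (fun ω => f (R ω)) μ) :
    ∫ ω, f (R ω) * {ω | 0 ≤ g (R ω) + U ω}.indicator (fun _ => (1 : ℝ)) ω ∂μ =
      ∫ ω, f (R ω) * stdNormalCDF (g (R ω)) ∂μ := by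
  have hmap : μ.map (fun ω => (U ω, R ω)) = (μ.map U).prod (μ.map R) :=
    (indepFun_iff_map_prod_eq_prod_map_map hU.aemeasurable hR.aemeasurable).1 hUR
  have : IsProbabilityMeasure (μ.map U) := Measure.isProbabilityMeasure_map hU.aemeasurable
  set F : ℝ × E → ℝ := fun q => f q.2 * {q : ℝ × E | 0 ≤ g q.2 + q.1}.indicator 1 q
  have hF : Measurable F := (hf.comp measurable_snd).mul <| measurable_const.indicator <|
    measurableSet_le measurable_const ((hg.comp measurable_snd).add measurable_fst)
  have hFint : Integrable F ((μ.map U).prod (μ.map R)) := by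
    refine (((integrable_map_measure hf.aestronglyMeasurable hR.aemeasurable).2 hfint).comp_snd
      (μ.map U)).norm.mono' hF.aestronglyMeasurable (ae_of_all _ fun q => ?_)
    simp only [F, norm_mul, Set.indicator_apply]
    split_ifs <;> simp
  have hslice : ∀ r, ∫ u, F (u, r) ∂(μ.map U) = f r * stdNormalCDF (g r) := fun r => by
    have hFr : ∀ u, F (u, r) = f r * (Set.Ici (-g r)).indicator (fun _ => (1 : ℝ)) u := by
      intro u
      simp only [F, Set.indicator_apply, Set.mem_ofPred_eq, Set.mem_Ici, neg_le_iff_add_nonneg',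
        Pi.one_apply]
    simp_rw [hFr]
    rw [integral_const_mul, integral_indicator_const _ measurableSet_Ici, smul_eq_mul, mul_one,
      hUgauss, gaussianReal_real_Ici_neg]
  calc ∫ ω, f (R ω) * {ω | 0 ≤ g (R ω) + U ω}.indicator (fun _ => (1 : ℝ)) ω ∂μ
      = ∫ q, F q ∂(μ.map fun ω => (U ω, R ω)) :=
        (integral_map (hU.prodMk hR).aemeasurable hF.aestronglyMeasurable).symm
    _ = ∫ r, ∫ u, F (u, r) ∂(μ.map U) ∂(μ.map R) := by rw [hmap, integral_prod_symm F hFint]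
    _ = ∫ r, f r * stdNormalCDF (g r) ∂(μ.map R) := by simp_rw [hslice]
    _ = ∫ ω, f (R ω) * stdNormalCDF (g (R ω)) ∂μ :=
        integral_map hR.aemeasurable (by fun_prop)

end Probability

section Model

variable {Ω : Type*} {mΩ : MeasurableSpace Ω} {μ : Measure Ω} [IsProbabilityMeasure μ]
  {E : Type*} [MeasurableSpace E] {R : Ω → E} {U D ξ Y : Ω → ℝ} {g : E → ℝ} {δ τ : ℝ}

/-- The weak form of `E[Y | R] = δ + τ Φ (g R)`. -/
lemma integral_mul_eq_of_probit_model (hR : Measurable R) (hU : Measurable U)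
    (hUR : IndepFun U R μ) (hUgauss : μ.map U = gaussianReal 0 1) (hg : Measurable g)
    (hD : ∀ ω, D ω = {ω | 0 ≤ g (R ω) + U ω}.indicator (fun _ => (1 : ℝ)) ω)
    (hξ : μ[ξ | MeasurableSpace.comap R inferInstance] =ᵐ[μ] fun _ => 0)
    (hY : ∀ᵐ ω ∂μ, Y ω = δ + τ * D ω + ξ ω) (hYint : Integrable Y μ)
    {h : E → ℝ} (hh : Measurable h) {C : ℝ} (hC : ∀ x, |h x| ≤ C) :
    ∫ ω, h (R ω) * Y ω ∂μ =
      δ * ∫ ω, h (R ω) ∂μ + τ * ∫ ω, h (R ω) * stdNormalCDF (g (R ω)) ∂μ := by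
  have hHint : Integrable (fun ω => h (R ω)) μ :=
    .of_bound (hh.comp hR).aestronglyMeasurable C (ae_of_all _ fun ω => hC (R ω))
  have hDmeas : Measurable D := by
    rw [funext hD]
    exact measurable_const.indicator (measurableSet_le measurable_const (by fun_prop))
  have hD1 : ∀ ω, ‖D ω‖ ≤ 1 := fun ω => by
    rw [hD ω, Set.indicator_apply]
    split_ifs <;> simp
  have hHD : Integrable (fun ω => h (R ω) * D ω) μ :=
    hHint.mul_bdd hDmeas.aestronglyMeasurable (ae_of_all _ hD1)
  have hξint : Integrable ξ μ := by
    refine ((hYint.sub (integrable_const δ)).sub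
      ((Integrable.of_bound hDmeas.aestronglyMeasurable 1 (ae_of_all _ hD1)).const_mul τ)).congr ?_
    filter_upwards [hY] with ω hω
    simp only [Pi.sub_apply, hω]
    ring
  have hHξ : Integrable (fun ω => h (R ω) * ξ ω) μ :=
    hξint.bdd_mul (hh.comp hR).aestronglyMeasurable (ae_of_all _ fun ω => hC (R ω))
  have hexog : ∫ ω, h (R ω) * ξ ω ∂μ = 0 :=
    integral_mul_eq_zero_of_condExp_eq_zero hR.comap_le
      (hh.comp (comap_measurable R)).stronglyMeasurable hHξ hξint hξ
  calc ∫ ω, h (R ω) * Y ω ∂μ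
      = ∫ ω, (δ * h (R ω) + τ * (h (R ω) * D ω)) + h (R ω) * ξ ω ∂μ := by
        refine integral_congr_ae ?_
        filter_upwards [hY] with ω hω
        rw [hω]
        ring
    _ = δ * ∫ ω, h (R ω) ∂μ + τ * ∫ ω, h (R ω) * D ω ∂μ := by
        rw [integral_add (f := fun ω => δ * h (R ω) + τ * (h (R ω) * D ω))
          ((hHint.const_mul δ).add (hHD.const_mul τ)) hHξ, hexog, add_zero,
          integral_add (hHint.const_mul δ) (hHD.const_mul τ), integral_const_mul,
          integral_const_mul]
    _ = _ := by
        simp_rw [hD]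
        rw [integral_mul_indicator_eq_integral_mul_stdNormalCDF hR hU hUR hUgauss hg hh hHint]

lemma covariance_probit_eq (hR : Measurable R) (hU : Measurable U)
    (hUR : IndepFun U R μ) (hUgauss : μ.map U = gaussianReal 0 1) (hg : Measurable g)
    (hD : ∀ ω, D ω = {ω | 0 ≤ g (R ω) + U ω}.indicator (fun _ => (1 : ℝ)) ω)
    (hξ : μ[ξ | MeasurableSpace.comap R inferInstance] =ᵐ[μ] fun _ => 0)
    (hY : ∀ᵐ ω ∂μ, Y ω = δ + τ * D ω + ξ ω) (hY2 : MemLp Y 2 μ) :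
    cov[fun ω => stdNormalCDF (g (R ω)), Y; μ] =
      τ * Var[fun ω => stdNormalCDF (g (R ω)); μ] := by
  have hp : MemLp (fun ω => stdNormalCDF (g (R ω))) 2 μ :=
    memLp_stdNormalCDF_comp (hg.comp hR).aemeasurable 2
  have hEY := integral_mul_eq_of_probit_model hR hU hUR hUgauss hg hD hξ hY
    (hY2.integrable one_le_two) measurable_const fun _ => abs_one.le
  have hEpY := integral_mul_eq_of_probit_model hR hU hUR hUgauss hg hD hξ hY
    (hY2.integrable one_le_two) (by fun_prop) (fun x => abs_stdNormalCDF_le_one (g x))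
  simp only [one_mul, integral_const, probReal_univ, smul_eq_mul, mul_one] at hEY
  rw [covariance_eq_sub hp hY2, variance_eq_sub hp]
  simp only [Pi.mul_apply, Pi.pow_apply, hEY, hEpY, pow_two]
  ring

end Model

/-- **Consistency of the two-step first-differenced DID estimator.**  In the model
`ΔY = δ + τ·D* + Δξ` with probit treatment `D* = 1{⟪R, γ⟫ + U ≥ 0}` and exogenous error
(`E[Δξ | σ(R)] = 0`), the slope from regressing `ΔY` on a constant and the predicted
probability `Φ(⟪R, γ̂_N⟫)` (with `γ̂_N →ᵖ γ`) converges in probability to `τ`. -/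
theorem two_step_fd_estimator_consistent
    {Ω : Type*} [MeasureSpace Ω] [IsProbabilityMeasure (ℙ : Measure Ω)]
    {k : ℕ} (V : ℕ → Ω → ℝ × (Fin k → ℝ) × ℝ × ℝ × ℝ)
    (γ : Fin k → ℝ) (δ τ : ℝ)
    (hmeas : ∀ i, Measurable (V i))
    (hindep : iIndepFun V (ℙ : Measure Ω))
    (hident : ∀ i, IdentDistrib (V i) (V 0) (ℙ : Measure Ω) (ℙ : Measure Ω))
    -- probit structure: D*ᵢ = 1{⟪Rᵢ, γ⟫ + Uᵢ ≥ 0}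
    (hDs : ∀ i ω, (V i ω).2.2.2.1
      = Set.indicator {ω' | 0 ≤ (V i ω').2.1 ⬝ᵥ γ + (V i ω').2.2.1} (fun _ => (1 : ℝ)) ω)
    -- U independent of R, standard Gaussian
    (hUR : IndepFun (fun ω => (V 0 ω).2.2.1) (fun ω => (V 0 ω).2.1) (ℙ : Measure Ω))
    (hUgauss : Measure.map (fun ω => (V 0 ω).2.2.1) (ℙ : Measure Ω) = gaussianReal 0 1)
    -- exogenous error: E[Δξ | σ(R)] = 0 a.s.
    (hexog : (ℙ : Measure Ω)[(fun ω => (V 0 ω).2.2.2.2) |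
        MeasurableSpace.comap (fun ω => (V 0 ω).2.1) inferInstance]
      =ᵐ[(ℙ : Measure Ω)] fun _ => (0 : ℝ))
    -- outcome equation: ΔYᵢ = δ + τ·D*ᵢ + Δξᵢ a.s.
    (hmodel : ∀ i, ∀ᵐ ω ∂(ℙ : Measure Ω),
      (V i ω).1 = δ + τ * (V i ω).2.2.2.1 + (V i ω).2.2.2.2)
    -- moment conditions
    (hYsq : MemLp (fun ω => (V 0 ω).1) 2 (ℙ : Measure Ω))
    (hRsq : MemLp (fun ω => (V 0 ω).2.1) 2 (ℙ : Measure Ω))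
    (hRY : Integrable (fun ω => ‖(V 0 ω).2.1‖ * |(V 0 ω).1|))
    -- first-step estimator
    (γhat : ℕ → Ω → (Fin k → ℝ)) (hγmeas : ∀ N, Measurable (γhat N))
    (hγconv : TendstoInMeasure (ℙ : Measure Ω) γhat atTop (fun _ => γ))
    -- nondegeneracy
    (hvar : 0 < variance (fun ω => stdNormalCDF ((V 0 ω).2.1 ⬝ᵥ γ)) (ℙ : Measure Ω)) :
    TendstoInMeasure (ℙ : Measure Ω)
      (fun N ω =>
        (∑ i : Fin N,
            (stdNormalCDF ((V i ω).2.1 ⬝ᵥ γhat N ω)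
                - (∑ j : Fin N, stdNormalCDF ((V j ω).2.1 ⬝ᵥ γhat N ω)) / (N : ℝ))
              * ((V i ω).1 - (∑ j : Fin N, (V j ω).1) / (N : ℝ)))
        / (∑ i : Fin N,
            (stdNormalCDF ((V i ω).2.1 ⬝ᵥ γhat N ω)
                - (∑ j : Fin N, stdNormalCDF ((V j ω).2.1 ⬝ᵥ γhat N ω)) / (N : ℝ)) ^ 2))
      atTop (fun _ => τ) := by
  have hV0 := hmeas 0
  have hp : MemLp (fun ω => stdNormalCDF ((V 0 ω).2.1 ⬝ᵥ γ)) 2 ℙ :=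
    memLp_stdNormalCDF_comp (by fun_prop) 2
  have hcov := covariance_probit_eq (g := (· ⬝ᵥ γ)) (by fun_prop) (by fun_prop) hUR hUgauss
    (by fun_prop) (hDs 0) hexog (hmodel 0) hYsq
  rw [covariance_eq_sub hp hYsq, variance_eq_sub hp] at hcov
  rw [variance_eq_sub hp] at hvar
  simp only [Pi.mul_apply, Pi.pow_apply] at hcov hvar
  have slln := fun (f : ℝ × (Fin k → ℝ) × ℝ × ℝ × ℝ → ℝ) (hf : Measurable f) =>
    ae_tendsto_sampleMean_comp (μ := ℙ) hindep hident hf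
  refine TendstoInMeasure.congr_left (fun N => ae_of_all _ fun ω =>
    olsSlope_eq_sum_fin N (fun i => stdNormalCDF ((V i ω).2.1 ⬝ᵥ γhat N ω)) fun i => (V i ω).1) ?_
  refine (exists_seq_tendstoInMeasure_atTop_iff fun N => (measurable_olsSlope
    (fun i => by have := hmeas i; have := hγmeas N; fun_prop)
    (fun i => by have := hmeas i; fun_prop) N).aestronglyMeasurable).2 fun ns hns => ?_
  obtain ⟨ms, hms, hγ⟩ := (hγconv.comp hns.tendsto_atTop).exists_seq_tendsto_ae
  refine ⟨ms, hms, ?_⟩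
  filter_upwards [hγ,
    slln (fun x => stdNormalCDF (x.2.1 ⬝ᵥ γ)) (by fun_prop) (hp.integrable one_le_two),
    slln (fun x => stdNormalCDF (x.2.1 ⬝ᵥ γ) ^ 2) (by fun_prop) hp.integrable_sq,
    slln (fun x => stdNormalCDF (x.2.1 ⬝ᵥ γ) * x.1) (by fun_prop) (hp.integrable_mul hYsq),
    slln (fun x => x.1) (by fun_prop) (hYsq.integrable one_le_two),
    slln (fun x => ‖x.2.1‖) (by fun_prop) (hRsq.integrable one_le_two).norm,
    slln (fun x => ‖x.2.1‖ * |x.1|) (by fun_prop) hRY]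
    with ω hγω hmp hmpp hmpY hmY hmR hmRY
  rw [← mul_div_cancel_right₀ τ hvar.ne', ← hcov]
  exact tendsto_olsSlope_of_abs_sub_le (hns.comp hms).tendsto_atTop
    (fun _ _ => abs_stdNormalCDF_dotProduct_sub_le _ _ _)
    (by simpa using (tendsto_iff_norm_sub_tendsto_zero.1 hγω).const_mul ((√(2 * π))⁻¹ * k))
    (fun _ _ => abs_stdNormalCDF_le_one _) (fun _ => abs_stdNormalCDF_le_one _)
    hmp hmpp hmpY hmY hmR hmRY hvar.ne'
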